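/- Let V, W ∈ ℂ[X], ħ a nonzero complex number, I ⊆ ℝ an interval, and s : I → ℂ^m a differentiable map whose coordinates are pairwise distinct for every t ∈ I and satisfy, for all t ∈ I and all i, the deformed Bethe equations V′(s_i(t)) + t·W′(s_i(t)) = 2ħ ∑_{j≠i} 1/(s_i(t) − s_j(t)). Assume moreover that for each t the Hessian matrix T(t) (with T_{ii}(t) = (1/ħ)(V″+tW″)(s_i(t)) + 2∑_{j≠i}1/(s_i(t)−s_j(t))² and T_{ij}(t) = −2/(s_i(t)−s_j(t))² for i ≠ j) is invertible with inverse A(t). Then for every t ∈ I and every x ∈ ℂ not equal to any s_i(t): d/dt [ ħ ∑_{i=1}^m 1/(x − s_i(t)) ] = − ∑_{i,j=1}^m A_{ij}(t) · W′(s_j(t)) / (x − s_i(t))². (This is the g = 0, n = 1 case of the variational formula δW_n^{(g)} = −∑Res W_{n+1}^{(g)} δV: the variation of the resolvent ω under a deformation of the potential is given by the quantum Bergmann kernel.) -/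

import Mathlib

/-!
Differentiating the Bethe equations along the family (legitimate because derivatives within a
nontrivial interval are unique) gives `ħ T(t) s'(t) = -W'(s(t))`, so `ħ s'(t) = -A(t) W'(s(t))`.
Since `d/dt ω_t(x) = ħ ∑ s_i'(t) / (x - s_i(t))²`, substituting this gives the formula.
-/

open Finset Polynomial

/-- The Hessian matrix `T` of the paper: `T i i = (1/ħ) vpp i + 2 ∑_{k≠i} 1/(σ i − σ k)²`,
`T i j = −2/(σ i − σ j)²` for `i ≠ j`; here `vpp i` is the second derivative of the
potential evaluated at `σ i`. -/
noncomputable def hessianT (m : ℕ) (hbar : ℂ) (vpp : Fin m → ℂ) (σ : Fin m → ℂ) :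
    Matrix (Fin m) (Fin m) ℂ :=
  Matrix.of fun i j =>
    if i = j then (1 / hbar) * vpp i + 2 * ∑ k ∈ univ.erase i, 1 / (σ i - σ k) ^ 2
    else -2 / (σ i - σ j) ^ 2

open Matrix

theorem Set.OrdConnected.uniqueDiffOn {I : Set ℝ} (hI : I.OrdConnected) (hI' : I.Nontrivial) :
    UniqueDiffOn ℝ I :=
  uniqueDiffOn_convex hI.convex (hI.convex.nontrivial_iff_nonempty_interior.1 hI')

theorem hessianT_mulVec_apply (m : ℕ) (hbar : ℂ) (vpp σ v : Fin m → ℂ) (i : Fin m) :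
    (hessianT m hbar vpp σ *ᵥ v) i
      = 1 / hbar * vpp i * v i + 2 * ∑ j ∈ univ.erase i, (v i - v j) / (σ i - σ j) ^ 2 := by
  have hoff : ∀ j ∈ univ.erase i,
      hessianT m hbar vpp σ i j * v j = -2 / (σ i - σ j) ^ 2 * v j :=
    fun j hj => by simp [hessianT, (ne_of_mem_erase hj).symm]
  rw [mulVec, dotProduct, ← add_sum_erase _ _ (mem_univ i), sum_congr rfl hoff]
  simp only [hessianT, of_apply, if_pos, mul_sum, sum_mul, add_mul, add_assoc, ← sum_add_distrib]
  congr 1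
  refine sum_congr rfl fun j _ => ?_
  ring

theorem HasDerivWithinAt.one_div_sub {𝕜 𝕜' : Type*} [NontriviallyNormedField 𝕜]
    [NontriviallyNormedField 𝕜'] [NormedAlgebra 𝕜 𝕜'] {f g : 𝕜 → 𝕜'} {f' g' : 𝕜'} {s : Set 𝕜}
    {x : 𝕜} (hf : HasDerivWithinAt f f' s x) (hg : HasDerivWithinAt g g' s x) (hfg : f x ≠ g x) :
    HasDerivWithinAt (fun y => 1 / (f y - g y)) (-(f' - g') / (f x - g x) ^ 2) s x := by
  simpa only [one_div] using (hf.fun_sub hg).fun_inv (sub_ne_zero.mpr hfg)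

theorem hasDerivWithinAt_resolvent {𝕜 𝕜' ι : Type*} [NontriviallyNormedField 𝕜]
    [NontriviallyNormedField 𝕜'] [NormedAlgebra 𝕜 𝕜'] [Fintype ι] {I : Set 𝕜} {t : 𝕜}
    {s : 𝕜 → ι → 𝕜'} {s' : ι → 𝕜'} (hs : ∀ i, HasDerivWithinAt (fun τ => s τ i) (s' i) I t)
    (c x : 𝕜') (hx : ∀ i, x ≠ s t i) :
    HasDerivWithinAt (fun τ => c * ∑ i, 1 / (x - s τ i))
      (∑ i, c * s' i / (x - s t i) ^ 2) I t := by
  have hterm (i : ι) := (hasDerivWithinAt_const t I x).one_div_sub (hs i) (hx i)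
  refine ((HasDerivWithinAt.fun_sum fun i _ => hterm i).const_mul c).congr_deriv ?_
  rw [mul_sum]
  exact sum_congr rfl fun i _ => by ring

section Bethe

variable {m : ℕ} {hbar : ℂ} {V W : ℂ[X]} {I : Set ℝ} {s : ℝ → Fin m → ℂ} {t : ℝ}
  {s' : Fin m → ℂ}

theorem deriv_bethe_equation (hI : UniqueDiffWithinAt ℝ I t) (ht : t ∈ I)
    (hs : ∀ i, HasDerivWithinAt (fun τ => s τ i) (s' i) I t)
    (hdist : ∀ i j, i ≠ j → s t i ≠ s t j)
    (hBethe : ∀ τ ∈ I, ∀ i,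
      V.derivative.eval (s τ i) + (τ : ℂ) * W.derivative.eval (s τ i)
        = 2 * hbar * ∑ j ∈ univ.erase i, 1 / (s τ i - s τ j)) (i : Fin m) :
    s' i * (V.derivative.derivative.eval (s t i) + t * W.derivative.derivative.eval (s t i))
      + W.derivative.eval (s t i)
      + 2 * hbar * ∑ j ∈ univ.erase i, (s' i - s' j) / (s t i - s t j) ^ 2 = 0 := by
  have hpoly (p : ℂ[X]) := (p.hasDerivAt (s t i)).comp_hasDerivWithinAt t (hs i)
  have hofReal : HasDerivWithinAt (fun τ : ℝ => (τ : ℂ)) 1 I t :=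
    (hasDerivAt_id t).ofReal_comp.hasDerivWithinAt
  have hpair (j) (hj : j ∈ univ.erase i) :=
    (hs i).one_div_sub (hs j) (hdist i j (ne_of_mem_erase hj).symm)
  have hdefect := ((hpoly V.derivative).add (hofReal.mul (hpoly W.derivative))).sub
    ((HasDerivWithinAt.fun_sum hpair).const_mul (2 * hbar))
  have hzero := (hasDerivWithinAt_const t I (0 : ℂ)).congr
    (fun τ hτ => sub_eq_zero.mpr (hBethe τ hτ i)) (sub_eq_zero.mpr (hBethe t ht i))
  have hderiv := hI.eq_deriv _ hdefect hzero
  simp only [neg_div, sum_neg_distrib, Function.comp_def] at hderiv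
  linear_combination hderiv

theorem smul_hessianT_mulVec_eq_neg_eval_derivative (hhbar : hbar ≠ 0)
    (hI : UniqueDiffWithinAt ℝ I t) (ht : t ∈ I)
    (hs : ∀ i, HasDerivWithinAt (fun τ => s τ i) (s' i) I t)
    (hdist : ∀ i j, i ≠ j → s t i ≠ s t j)
    (hBethe : ∀ τ ∈ I, ∀ i,
      V.derivative.eval (s τ i) + (τ : ℂ) * W.derivative.eval (s τ i)
        = 2 * hbar * ∑ j ∈ univ.erase i, 1 / (s τ i - s τ j)) :
    hbar • (hessianT m hbar
        (fun k => V.derivative.derivative.eval (s t k)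
          + (t : ℂ) * W.derivative.derivative.eval (s t k)) (s t) *ᵥ s')
      = -fun i => W.derivative.eval (s t i) := by
  funext i
  rw [Pi.smul_apply, hessianT_mulVec_apply, smul_eq_mul, Pi.neg_apply]
  field_simp
  linear_combination deriv_bethe_equation hI ht hs hdist hBethe i

end Bethe

/-- Along a differentiable family of deformed Bethe roots for
`V + t W` whose Hessian `T(t)` is invertible with inverse `A(t)`, the resolvent
`ω_t(x) = ħ ∑ i, 1/(x − s i (t))` satisfies
`d/dt ω_t(x) = − ∑ i j, A i j (t) · W′(s j (t)) / (x − s i (t))²`. -/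
theorem resolvent_variation (m : ℕ) (hbar : ℂ) (hhbar : hbar ≠ 0)
    (V W : Polynomial ℂ) (I : Set ℝ) (hI : I.OrdConnected) (hInontriv : I.Nontrivial)
    (s s' : ℝ → Fin m → ℂ) (A : ℝ → Matrix (Fin m) (Fin m) ℂ)
    (hdiff : ∀ t ∈ I, ∀ i, HasDerivWithinAt (fun τ => s τ i) (s' t i) I t)
    (hdist : ∀ t ∈ I, ∀ i j, i ≠ j → s t i ≠ s t j)
    (hBethe : ∀ t ∈ I, ∀ i,
      V.derivative.eval (s t i) + (t : ℂ) * W.derivative.eval (s t i)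
        = 2 * hbar * ∑ j ∈ univ.erase i, 1 / (s t i - s t j))
    (hA : ∀ t ∈ I,
      hessianT m hbar
          (fun k => V.derivative.derivative.eval (s t k)
            + (t : ℂ) * W.derivative.derivative.eval (s t k)) (s t) * A t = 1 ∧
      A t * hessianT m hbar
          (fun k => V.derivative.derivative.eval (s t k)
            + (t : ℂ) * W.derivative.derivative.eval (s t k)) (s t) = 1) :
    ∀ t ∈ I, ∀ x : ℂ, (∀ i, x ≠ s t i) →
      HasDerivWithinAt (fun τ => hbar * ∑ i, 1 / (x - s τ i))
        (-∑ i, ∑ j, A t i j * W.derivative.eval (s t j) / (x - s t i) ^ 2) I t := by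
  intro t ht x hx
  have hT := smul_hessianT_mulVec_eq_neg_eval_derivative hhbar (hI.uniqueDiffOn hInontriv t ht)
    ht (hdiff t ht) (hdist t ht) hBethe
  have hs' : hbar • s' t = -(A t *ᵥ fun j => W.derivative.eval (s t j)) := by
    rw [← one_mulVec (s' t), ← (hA t ht).2, ← mulVec_mulVec, ← mulVec_smul, hT, mulVec_neg]
  refine (hasDerivWithinAt_resolvent (hdiff t ht) hbar x hx).congr_deriv ?_
  rw [← sum_neg_distrib]
  refine sum_congr rfl fun i _ => ?_
  rw [← sum_div, ← neg_div, ← smul_eq_mul, ← Pi.smul_apply, hs']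
  simp only [Pi.neg_apply, mulVec, dotProduct]
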